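/- For the normalized Laplacian L of a simple graph G with no isolated vertices, tr(L⁴) = |V_G| + Σ_{(u,v) ∈ E_G} [12/(d^u d^v) + 2/(d^u d^v)²] + Σ_{3-paths (u,v,w)} 4/(d^u (d^v)² d^w) - Σ_{triangles {u,v,w}} 24/(d^u d^v d^w) + Σ_{4-cycles (u,v,w,z)} 8/(d^u d^v d^w d^z), where the 3-path sum is over unordered paths u–v–w with u ≠ w and the 4-cycle sum is over unordered 4-cycles. -/

import Mathlib

/-!
Writing `S = D^{-1/2}`, we have `L = 1 - S A S`, and cyclic invariance of the trace gives
`tr Lᵏ = tr (1 - P)ᵏ` for the random-walk matrix `P = D⁻¹ A`.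
Now `tr Pᵏ` is the sum over closed walks of length `k` of the product of `1/dᵛ` along the walk.
Closed 2-walks run along an edge and back, closed 3-walks go around a triangle (six ways), and a
closed 4-walk either runs along one edge twice, runs along a 2-path (starting at its middle or at
an end), or goes around a 4-cycle.
-/

/-- The normalized Laplacian `L = I - D^{-1/2} A D^{-1/2}` of a simple graph:
`L u u = 1`, `L u v = -1/√(dᵘ dᵛ)` when `u ~ v`, and `0` otherwise. -/
noncomputable def normLap {V : Type*} [Fintype V] [DecidableEq V]
    (G : SimpleGraph V) [DecidableRel G.Adj] : Matrix V V ℝ :=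
  fun u v =>
    if u = v then 1
    else if G.Adj u v then -(1 / Real.sqrt ((G.degree u : ℝ) * (G.degree v : ℝ)))
    else 0

/-- The symmetric edge weight `e ↦ c / (dᵘ · dᵛ)^k` for an edge `e = {u, v}`. -/
noncomputable def edgePow {V : Type*} [Fintype V] [DecidableEq V]
    (G : SimpleGraph V) [DecidableRel G.Adj] (c : ℝ) (k : ℕ) : Sym2 V → ℝ :=
  Sym2.lift ⟨fun u v => c / ((G.degree u : ℝ) * (G.degree v : ℝ)) ^ k,
    fun u v => by simp [mul_comm]⟩

open Finset Matrix Polynomial SimpleGraph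

theorem Finset.card_filter_pairwise_ne_of_card_eq_three {α : Type*} [DecidableEq α]
    {t : Finset α} (ht : #t = 3) :
    #{p ∈ t ×ˢ t ×ˢ t | p.1 ≠ p.2.1 ∧ p.2.1 ≠ p.2.2 ∧ p.2.2 ≠ p.1} = 6 := by
  obtain ⟨a, b, c, hab, hac, hbc, rfl⟩ := card_eq_three.1 ht
  rw [card_filter]
  simp only [sum_product]
  simp [sum_insert, hab, hac, hbc, hab.symm, hac.symm, hbc.symm, -sum_boole]

namespace Matrix

section Semiring

variable {n R : Type*} [Fintype n] [DecidableEq n] [Semiring R] (M : Matrix n n R)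

theorem trace_sq_eq_sum : trace (M ^ 2) = ∑ a, ∑ b, M a b * M b a := by
  simp [sq, trace, mul_apply]

theorem trace_pow_three_eq_sum : trace (M ^ 3) = ∑ a, ∑ b, ∑ c, M a b * M b c * M c a := by
  simp [pow_succ', trace, mul_apply, mul_sum, mul_assoc]

theorem trace_pow_four_eq_sum :
    trace (M ^ 4) = ∑ a, ∑ b, ∑ c, ∑ d, M a b * M b c * M c d * M d a := by
  simp [pow_succ', trace, mul_apply, mul_sum, mul_assoc]

end Semiring

variable {n R : Type*} [Fintype n] [DecidableEq n] [CommRing R]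

theorem trace_pow_mul_comm (P Q : Matrix n n R) (k : ℕ) :
    trace ((P * Q) ^ k) = trace ((Q * P) ^ k) := by
  cases k with
  | zero => simp
  | succ k => rw [pow_succ, ← mul_assoc, mul_pow_mul, trace_mul_comm, ← mul_assoc, ← pow_succ']

theorem trace_aeval_mul_comm (p : R[X]) (P Q : Matrix n n R) :
    trace (aeval (P * Q) p) = trace (aeval (Q * P) p) := by
  simp only [aeval_eq_sum_range, trace_sum, trace_smul, trace_pow_mul_comm]

theorem trace_one_sub_pow_four (X : Matrix n n R) :
    trace ((1 - X) ^ 4) = Fintype.card n - 4 * trace X + 6 * trace (X ^ 2)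
      - 4 * trace (X ^ 3) + trace (X ^ 4) := by
  have : (1 - X) ^ 4 = 1 - 4 • X + 6 • X ^ 2 - 4 • X ^ 3 + X ^ 4 := by noncomm_ring
  rw [this, trace_add, trace_sub, trace_add, trace_sub, trace_one, trace_smul, trace_smul,
    trace_smul, nsmul_eq_mul, nsmul_eq_mul, nsmul_eq_mul]
  norm_num

end Matrix

section EdgePow

variable {V : Type*} [Fintype V] [DecidableEq V] (G : SimpleGraph V) [DecidableRel G.Adj]

theorem edgePow_mk (c : ℝ) (k : ℕ) (u v : V) :
    edgePow G c k s(u, v) = c / ((G.degree u : ℝ) * G.degree v) ^ k :=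
  rfl

theorem edgePow_eq_mul (c : ℝ) (k : ℕ) (e : Sym2 V) : edgePow G c k e = c * edgePow G 1 k e := by
  induction e using Sym2.ind with
  | h u v => rw [edgePow_mk, edgePow_mk, mul_one_div]

end EdgePow

namespace SimpleGraph

section Counting

variable {V M : Type*} (G : SimpleGraph V) [AddCommMonoid M]

theorem isNClique_three_and_mem_iff [DecidableEq V] {t : Finset V} {x y z : V} :
    (G.IsNClique 3 t ∧ x ∈ t ∧ y ∈ t ∧ z ∈ t ∧ x ≠ y ∧ y ≠ z ∧ z ≠ x) ↔
      t = {x, y, z} ∧ G.Adj x y ∧ G.Adj y z ∧ G.Adj z x := by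
  constructor
  · rintro ⟨ht, hx, hy, hz, hxy, hyz, hzx⟩
    have hsub : {x, y, z} ⊆ t := by simp [insert_subset_iff, hx, hy, hz]
    have hcard : #{x, y, z} = 3 := card_eq_three.2 ⟨x, y, z, hxy, hzx.symm, hyz, rfl⟩
    exact ⟨(eq_of_subset_of_card_le hsub (by rw [ht.card_eq, hcard])).symm,
      ht.isClique hx hy hxy, ht.isClique hy hz hyz, ht.isClique hz hx hzx⟩
  · rintro ⟨rfl, hxy, hyz, hzx⟩
    exact ⟨is3Clique_triple_iff.2 ⟨hxy, hzx.symm, hyz⟩, by simp, by simp, by simp,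
      hxy.ne, hyz.ne, hzx.ne⟩

variable [DecidableRel G.Adj]

theorem ite_closedWalk_four_eq_add [DecidableEq V] (f : V → V → V → V → M) (u v w z : V) :
    (if G.Adj u v ∧ G.Adj v w ∧ G.Adj w z ∧ G.Adj z u then f u v w z else 0) =
      (if w = u ∧ z = v ∧ G.Adj u v then f u v w z else 0)
      + (if w = u ∧ G.Adj u v ∧ G.Adj u z ∧ v ≠ z then f u v w z else 0)
      + (if z = v ∧ G.Adj v u ∧ G.Adj v w ∧ u ≠ w then f u v w z else 0)
      + (if G.Adj u v ∧ G.Adj v w ∧ G.Adj w z ∧ G.Adj z u ∧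
          u ≠ v ∧ u ≠ w ∧ u ≠ z ∧ v ≠ w ∧ v ≠ z ∧ w ≠ z then f u v w z else 0) := by
  rcases eq_or_ne w u with rfl | hwu <;> rcases eq_or_ne z v with rfl | hzv
  · simp [adj_comm]
  · simp [adj_comm, hzv.symm, hzv]
  · by_cases h : G.Adj w z <;> simp [h, adj_comm, hwu, hwu.symm]
  · by_cases h : G.Adj u v ∧ G.Adj v w ∧ G.Adj w z ∧ G.Adj z u
    · simp [h, h.1.ne, h.2.1.ne, h.2.2.1.ne, h.2.2.2.ne.symm, hwu, hzv, hwu.symm, hzv.symm]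
    · simp only [h, false_and, if_false, hwu, hzv, zero_add]
      exact (if_neg fun h' => h ⟨h'.1, h'.2.1, h'.2.2.1, h'.2.2.2.1⟩).symm

variable [Fintype V]

theorem sum_adj_eq_sum_dart (f : V → V → M) :
    ∑ u, ∑ v, (if G.Adj u v then f u v else 0) = ∑ d : G.Dart, f d.fst d.snd := by
  rw [← Fintype.sum_prod_type' (fun u v => if G.Adj u v then f u v else 0), ← sum_filter]
  exact sum_bij' (fun p hp ↦ ⟨p, (mem_filter.1 hp).2⟩) (fun d _ ↦ d.toProd) (by simp)
    (by simp [Dart.adj]) (by simp) (by simp) (by simp)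

variable [DecidableEq V]

theorem sum_dart_edge_eq_two_nsmul (g : Sym2 V → M) :
    ∑ d : G.Dart, g d.edge = 2 • ∑ e ∈ G.edgeFinset, g e := by
  rw [← sum_fiberwise_of_maps_to (t := G.edgeFinset) (g := Dart.edge) (by simp), smul_sum]
  refine sum_congr rfl fun e he => ?_
  rw [sum_congr rfl fun d hd => congrArg g (mem_filter.1 hd).2, sum_const,
    dart_edge_fiber_card G e (mem_edgeFinset.1 he)]

theorem sum_adj_eq_two_nsmul_sum_edgeFinset (g : Sym2 V → M) :
    ∑ u, ∑ v, (if G.Adj u v then g s(u, v) else 0) = 2 • ∑ e ∈ G.edgeFinset, g e := by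
  rw [sum_adj_eq_sum_dart, ← sum_dart_edge_eq_two_nsmul]
  rfl

theorem sum_triangle_eq_six_nsmul_sum_cliqueFinset (g : Finset V → M) :
    ∑ a, ∑ b, ∑ c, (if G.Adj a b ∧ G.Adj b c ∧ G.Adj c a then g {a, b, c} else 0) =
      6 • ∑ t ∈ G.cliqueFinset 3, g t := by
  calc ∑ a, ∑ b, ∑ c, (if G.Adj a b ∧ G.Adj b c ∧ G.Adj c a then g {a, b, c} else 0)
      = ∑ p ∈ {p : V × V × V | G.Adj p.1 p.2.1 ∧ G.Adj p.2.1 p.2.2 ∧ G.Adj p.2.2 p.1},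
          ∑ t ∈ {{p.1, p.2.1, p.2.2}}, g t := by
        simp only [sum_singleton, sum_filter, Fintype.sum_prod_type]
    _ = ∑ t ∈ G.cliqueFinset 3,
          ∑ _p ∈ {p ∈ t ×ˢ t ×ˢ t | p.1 ≠ p.2.1 ∧ p.2.1 ≠ p.2.2 ∧ p.2.2 ≠ p.1}, g t :=
        (sum_comm' fun t p => by
          simpa [mem_cliqueFinset_iff, and_assoc] using G.isNClique_three_and_mem_iff).symm
    _ = 6 • ∑ t ∈ G.cliqueFinset 3, g t := by
        rw [smul_sum]
        refine sum_congr rfl fun t ht => ?_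
        rw [sum_const,
          card_filter_pairwise_ne_of_card_eq_three (G.mem_cliqueFinset_iff.1 ht).card_eq]

theorem sum_closedWalk_four_eq (f : V → V → V → V → M) :
    ∑ u, ∑ v, ∑ w, ∑ z,
        (if G.Adj u v ∧ G.Adj v w ∧ G.Adj w z ∧ G.Adj z u then f u v w z else 0) =
      ∑ u, ∑ v, (if G.Adj u v then f u v u v else 0)
      + ∑ v, ∑ u, ∑ w, (if G.Adj v u ∧ G.Adj v w ∧ u ≠ w then f v u v w + f u v w v else 0)
      + ∑ u, ∑ v, ∑ w, ∑ z,
          (if G.Adj u v ∧ G.Adj v w ∧ G.Adj w z ∧ G.Adj z u ∧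
              u ≠ v ∧ u ≠ w ∧ u ≠ z ∧ v ≠ w ∧ v ≠ z ∧ w ≠ z then f u v w z else 0) := by
  have hback : ∑ u, ∑ v, ∑ w, ∑ z, (if w = u ∧ z = v ∧ G.Adj u v then f u v w z else 0) =
      ∑ u, ∑ v, (if G.Adj u v then f u v u v else 0) := by
    simp [ite_and]
  have hpath₁ : ∑ u, ∑ v, ∑ w, ∑ z,
      (if w = u ∧ G.Adj u v ∧ G.Adj u z ∧ v ≠ z then f u v w z else 0) =
      ∑ v, ∑ u, ∑ w, (if G.Adj v u ∧ G.Adj v w ∧ u ≠ w then f v u v w else 0) := by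
    simp [ite_and]
  have hpath₂ : ∑ u, ∑ v, ∑ w, ∑ z,
      (if z = v ∧ G.Adj v u ∧ G.Adj v w ∧ u ≠ w then f u v w z else 0) =
      ∑ v, ∑ u, ∑ w, (if G.Adj v u ∧ G.Adj v w ∧ u ≠ w then f u v w v else 0) := by
    rw [sum_comm]
    simp [ite_and]
  simp only [G.ite_closedWalk_four_eq_add f, sum_add_distrib, hback, hpath₁, hpath₂, ite_add_zero,
    add_assoc]

end Counting

variable {V : Type*} [Fintype V] [DecidableEq V] (G : SimpleGraph V) [DecidableRel G.Adj]

noncomputable def randomWalkMatrix : Matrix V V ℝ :=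
  diagonal (fun v => (G.degree v : ℝ)⁻¹) * G.adjMatrix ℝ

theorem randomWalkMatrix_apply (u v : V) :
    G.randomWalkMatrix u v = if G.Adj u v then (G.degree u : ℝ)⁻¹ else 0 := by
  simp only [randomWalkMatrix, diagonal_mul, adjMatrix_apply, mul_ite, mul_one, mul_zero]

theorem trace_randomWalkMatrix : trace G.randomWalkMatrix = 0 := by
  simp [trace, randomWalkMatrix_apply]

theorem trace_randomWalkMatrix_sq :
    trace (G.randomWalkMatrix ^ 2) = 2 * ∑ e ∈ G.edgeFinset, edgePow G 1 1 e := by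
  have h := G.sum_adj_eq_two_nsmul_sum_edgeFinset (edgePow G 1 1)
  rw [nsmul_eq_mul, Nat.cast_ofNat] at h
  rw [← h, trace_sq_eq_sum]
  refine sum_congr rfl fun u _ => sum_congr rfl fun v _ => ?_
  by_cases huv : G.Adj u v <;> simp [randomWalkMatrix_apply, huv, adj_comm, edgePow_mk, mul_comm]

theorem trace_randomWalkMatrix_pow_three :
    trace (G.randomWalkMatrix ^ 3) = 6 * ∑ t ∈ G.cliqueFinset 3, (∏ x ∈ t, (G.degree x : ℝ))⁻¹ := by
  have h := G.sum_triangle_eq_six_nsmul_sum_cliqueFinset fun t => (∏ x ∈ t, (G.degree x : ℝ))⁻¹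
  rw [nsmul_eq_mul, Nat.cast_ofNat] at h
  rw [← h, trace_pow_three_eq_sum]
  simp only [randomWalkMatrix_apply, ite_zero_mul_ite_zero, and_assoc]
  refine sum_congr rfl fun a _ => sum_congr rfl fun b _ => sum_congr rfl fun c _ => ?_
  split_ifs with habc
  · obtain ⟨hab, hbc, hca⟩ := habc
    rw [prod_insert (by simp [hab.ne, hca.ne']), prod_insert (by simp [hbc.ne]), prod_singleton,
      mul_inv, mul_inv, mul_assoc]
  · rfl

theorem trace_randomWalkMatrix_pow_four :
    trace (G.randomWalkMatrix ^ 4) = 2 * ∑ e ∈ G.edgeFinset, edgePow G 1 2 e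
      + (∑ v, ∑ u, ∑ w,
          if G.Adj v u ∧ G.Adj v w ∧ u ≠ w then
            2 / ((G.degree u : ℝ) * (G.degree v : ℝ) ^ 2 * (G.degree w : ℝ))
          else 0)
      + (∑ u, ∑ v, ∑ w, ∑ z,
          if G.Adj u v ∧ G.Adj v w ∧ G.Adj w z ∧ G.Adj z u ∧
              u ≠ v ∧ u ≠ w ∧ u ≠ z ∧ v ≠ w ∧ v ≠ z ∧ w ≠ z then
            1 / ((G.degree u : ℝ) * (G.degree v : ℝ) * (G.degree w : ℝ) * (G.degree z : ℝ))
          else 0) := by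
  have h := G.sum_adj_eq_two_nsmul_sum_edgeFinset (edgePow G 1 2)
  rw [nsmul_eq_mul, Nat.cast_ofNat] at h
  rw [← h, trace_pow_four_eq_sum]
  simp only [randomWalkMatrix_apply, ite_zero_mul_ite_zero, and_assoc]
  rw [G.sum_closedWalk_four_eq fun u v w z =>
    (G.degree u : ℝ)⁻¹ * (G.degree v : ℝ)⁻¹ * (G.degree w : ℝ)⁻¹ * (G.degree z : ℝ)⁻¹]
  have hback : ∀ u v : V, (G.degree u : ℝ)⁻¹ * (G.degree v : ℝ)⁻¹ * (G.degree u : ℝ)⁻¹ *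
      (G.degree v : ℝ)⁻¹ = edgePow G 1 2 s(u, v) := fun u v => by rw [edgePow_mk]; ring
  have hpath : ∀ u v w : V, (G.degree v : ℝ)⁻¹ * (G.degree u : ℝ)⁻¹ * (G.degree v : ℝ)⁻¹ *
      (G.degree w : ℝ)⁻¹ + (G.degree u : ℝ)⁻¹ * (G.degree v : ℝ)⁻¹ * (G.degree w : ℝ)⁻¹ *
      (G.degree v : ℝ)⁻¹ = 2 / ((G.degree u : ℝ) * (G.degree v : ℝ) ^ 2 * (G.degree w : ℝ)) :=
    fun u v w => by ring
  simp only [hback, hpath]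
  simp only [← mul_inv, one_div]

end SimpleGraph

section NormLap

variable {V : Type*} [Fintype V] [DecidableEq V] (G : SimpleGraph V) [DecidableRel G.Adj]

theorem normLap_eq_one_sub :
    normLap G = 1 - diagonal (fun v => (√(G.degree v : ℝ))⁻¹) * G.adjMatrix ℝ *
      diagonal (fun v => (√(G.degree v : ℝ))⁻¹) := by
  ext u v
  simp only [normLap, Matrix.sub_apply, one_apply, mul_diagonal, diagonal_mul, adjMatrix_apply]
  by_cases huv : u = v
  · simp [huv]
  · by_cases h : G.Adj u v <;> simp [huv, h, Real.sqrt_mul, mul_comm]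

theorem trace_normLap_pow (k : ℕ) :
    trace (normLap G ^ k) = trace ((1 - G.randomWalkMatrix) ^ k) := by
  have h := trace_aeval_mul_comm ((1 - X) ^ k)
    (diagonal (fun v => (√(G.degree v : ℝ))⁻¹) * G.adjMatrix ℝ)
    (diagonal (fun v => (√(G.degree v : ℝ))⁻¹))
  simp only [map_pow, map_sub, map_one, aeval_X] at h
  rw [normLap_eq_one_sub, h, ← mul_assoc, diagonal_mul_diagonal]
  simp [randomWalkMatrix, ← mul_inv, Real.mul_self_sqrt]

end NormLap

/-- The unordered 3-path sum is written as an ordered sum over triples `(v, u, w)` with `u, w`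
distinct neighbors of the middle vertex `v` (each path counted twice, hence weight `2` instead of
`4`), and the unordered 4-cycle sum as an ordered sum over cyclically adjacent pairwise-distinct
quadruples (each cycle counted eight times, hence weight `1` instead of `8`). -/
theorem trace_normLap_fourth_general
    {V : Type*} [Fintype V] [DecidableEq V]
    (G : SimpleGraph V) [DecidableRel G.Adj] :
    (normLap G ^ 4).trace =
      (Fintype.card V : ℝ)
        + ∑ e ∈ G.edgeFinset, (edgePow G 12 1 e + edgePow G 2 2 e)
        + (∑ v, ∑ u, ∑ w,
            if G.Adj v u ∧ G.Adj v w ∧ u ≠ w then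
              2 / ((G.degree u : ℝ) * (G.degree v : ℝ) ^ 2 * (G.degree w : ℝ))
            else 0)
        - ∑ t ∈ G.cliqueFinset 3, 24 / ∏ x ∈ t, (G.degree x : ℝ)
        + (∑ u, ∑ v, ∑ w, ∑ z,
            if G.Adj u v ∧ G.Adj v w ∧ G.Adj w z ∧ G.Adj z u ∧
                u ≠ v ∧ u ≠ w ∧ u ≠ z ∧ v ≠ w ∧ v ≠ z ∧ w ≠ z then
              1 / ((G.degree u : ℝ) * (G.degree v : ℝ) * (G.degree w : ℝ) *
                (G.degree z : ℝ))
            else 0) := by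
  rw [trace_normLap_pow, trace_one_sub_pow_four, G.trace_randomWalkMatrix,
    G.trace_randomWalkMatrix_sq, G.trace_randomWalkMatrix_pow_three,
    G.trace_randomWalkMatrix_pow_four, sum_add_distrib]
  simp only [edgePow_eq_mul G 12, edgePow_eq_mul G 2, div_eq_mul_inv (24 : ℝ), ← mul_sum]
  ring

/-- For the normalized Laplacian `L` of a simple graph `G` with no isolated vertices,
`tr(L⁴) = |V_G| + ∑_{(u,v) ∈ E_G} [12/(dᵘ dᵛ) + 2/(dᵘ dᵛ)²]
        + ∑_{3-paths u–v–w} 4/(dᵘ (dᵛ)² dʷ) - ∑_{triangles {u,v,w}} 24/(dᵘ dᵛ dʷ)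
        + ∑_{4-cycles (u,v,w,z)} 8/(dᵘ dᵛ dʷ dᶻ)`.
Here the unordered 3-path sum is written as an ordered sum over triples `(v, u, w)` with
`u, w` distinct neighbors of the middle vertex `v` (each unordered path counted twice,
so with weight `2` instead of `4`), and the unordered 4-cycle sum as an ordered sum over
cyclically adjacent pairwise-distinct quadruples (each unordered 4-cycle counted eight
times, so with weight `1` instead of `8`). -/
theorem trace_normLap_fourth
    {V : Type*} [Fintype V] [DecidableEq V]
    (G : SimpleGraph V) [DecidableRel G.Adj] (hdeg : ∀ v, 0 < G.degree v) :
    (normLap G ^ 4).trace =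
      (Fintype.card V : ℝ)
        + ∑ e ∈ G.edgeFinset, (edgePow G 12 1 e + edgePow G 2 2 e)
        + (∑ v, ∑ u, ∑ w,
            if G.Adj v u ∧ G.Adj v w ∧ u ≠ w then
              2 / ((G.degree u : ℝ) * (G.degree v : ℝ) ^ 2 * (G.degree w : ℝ))
            else 0)
        - ∑ t ∈ G.cliqueFinset 3, 24 / ∏ x ∈ t, (G.degree x : ℝ)
        + (∑ u, ∑ v, ∑ w, ∑ z,
            if G.Adj u v ∧ G.Adj v w ∧ G.Adj w z ∧ G.Adj z u ∧
                u ≠ v ∧ u ≠ w ∧ u ≠ z ∧ v ≠ w ∧ v ≠ z ∧ w ≠ z then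
              1 / ((G.degree u : ℝ) * (G.degree v : ℝ) * (G.degree w : ℝ) *
                (G.degree z : ℝ))
            else 0) :=
  trace_normLap_fourth_general G
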